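/- If each X_i is a finite set with at least two points, then d⁰(V) is a σ-ideal: it is closed under subsets and countable unions. -/

import Mathlib

open Set Cardinal

/-- The set of branches of the trimmed tree `T[A,α]`:
all `β` agreeing with `α` outside of `A`. -/
def branches (X : ℕ → Type) (A : Set ℕ) (α : ∀ i, X i) : Set (∀ i, X i) :=
  {β | ∀ n ∉ A, β n = α n}

/-- The family `V` of branch sets of trimmed trees. -/
def treeV (X : ℕ → Type) : Set (Set (∀ i, X i)) :=
  {S | ∃ A α, A.Infinite ∧ S = branches X A α}

/-- `[T]*`: all `β` agreeing with `α` outside of `A`, up to finitely many exceptions. -/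
def starBranches (X : ℕ → Type) (A : Set ℕ) (α : ∀ i, X i) : Set (∀ i, X i) :=
  {β | {n | n ∉ A ∧ β n ≠ α n}.Finite}

/-- The family `V*`. -/
def treeVstar (X : ℕ → Type) : Set (Set (∀ i, X i)) :=
  {S | ∃ A α, A.Infinite ∧ S = starBranches X A α}

/-- The ideal `d⁰(F)`. -/
def d0 {X : ℕ → Type} (F : Set (Set (∀ i, X i))) : Set (Set (∀ i, X i)) :=
  {Y | ∀ W ∈ F, ∃ U ∈ F, U ⊆ W ∧ U ∩ Y = ∅}

/-- `α_s`: overwrite `α` by `s` on `{0,…,n-1}`. -/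
def modifySeq (X : ℕ → Type) (n : ℕ) (s α : ∀ i, X i) : ∀ i, X i :=
  fun i => if i < n then s i else α i

/-- `add(d⁰(V))`: the least cardinality of a subfamily of `d⁰(V)` whose union
is not in `d⁰(V)`. -/
noncomputable def addd0 (X : ℕ → Type) : Cardinal :=
  sInf {c | ∃ G : Set (Set (∀ i, X i)), G ⊆ d0 (treeV X) ∧ ⋃₀ G ∉ d0 (treeV X) ∧ c = #G}

/-! Fusion. If `Y ∈ d⁰(V)`, then inside any `T[A,α]` and for any finite `F ⊆ A` there is a
subtree `T[A',α']` with `F ⊆ A'` missing `Y`: apply the definition of `d⁰(V)` in turn to each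
of the finitely many patterns on `F` (this is where finiteness of the `X i` enters). For
`Y_n ∈ d⁰(V)` do this at stage `n` for `Y_n`, adding to `F` a new free coordinate above `n`.
The union `B` of the `F`'s is then infinite, each coordinate of `α_n` is eventually
constant outside `⋂ A_n`, and `T[B,β]` with `β` the limit lies in every stage, so it misses
every `Y_n`. -/

section Branches

variable {X : ℕ → Type}

lemma mem_d0_of_subset {F : Set (Set (∀ i, X i))} {Y Z : Set (∀ i, X i)} (hY : Y ∈ d0 F)
    (hZY : Z ⊆ Y) : Z ∈ d0 F := fun W hW =>
  let ⟨U, hU, hUW, hUY⟩ := hY W hW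
  ⟨U, hU, hUW, subset_empty_iff.1 (hUY ▸ inter_subset_inter_right U hZY)⟩

lemma branches_subset_branches {A B : Set ℕ} {α β : ∀ i, X i} (hBA : B ⊆ A)
    (h : ∀ i ∉ A, β i = α i) : branches X B β ⊆ branches X A α := by
  intro γ hγ i hi
  rw [hγ i fun hiB => hi (hBA hiB), h i hi]

lemma branches_subset_branches_iff [∀ i, Nontrivial (X i)] {A B : Set ℕ} {α β : ∀ i, X i} :
    branches X B β ⊆ branches X A α ↔ B ⊆ A ∧ ∀ i ∉ A, β i = α i := by
  refine ⟨fun h => ⟨fun i hiB => ?_, h fun _ _ => rfl⟩,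
    fun h => branches_subset_branches h.1 h.2⟩
  by_contra hiA
  obtain ⟨c, hc⟩ := exists_ne (α i)
  have hupdate : Function.update β i c ∈ branches X B β := fun n hn =>
    Function.update_of_ne (ne_of_mem_of_not_mem hiB hn).symm _ _
  exact hc (by simpa using h hupdate i hiA)

lemma mem_branches_piecewise {A : Set ℕ} {F : Finset ℕ} {α β : ∀ i, X i}
    (hβ : β ∈ branches X (A ∪ F) α) : β ∈ branches X A (F.piecewise β α) := by
  intro i hi
  by_cases hiF : i ∈ F
  · rw [F.piecewise_eq_of_mem _ _ hiF]
  · rw [F.piecewise_eq_of_notMem _ _ hiF]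
    exact hβ i (by simp [hi, hiF])

lemma finite_range_piecewise [∀ i, Finite (X i)] (F : Finset ℕ) (α : ∀ i, X i) :
    (range fun β => F.piecewise β α).Finite := by
  refine Finite.of_finite_image (f := fun s (i : F) => s i) (toFinite _) ?_
  rintro _ ⟨β, rfl⟩ _ ⟨β', rfl⟩ h
  funext i
  by_cases hi : i ∈ F
  · simpa [hi] using congr_fun h ⟨i, hi⟩
  · simp [hi]

variable [∀ i, Nontrivial (X i)]

lemma exists_branches_piecewise_inter_eq_empty {Y : Set (∀ i, X i)} (hY : Y ∈ d0 (treeV X))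
    {A : Set ℕ} (hA : A.Infinite) {F : Finset ℕ} (hFA : Disjoint (F : Set ℕ) A) (α : ∀ i, X i)
    {S : Set (∀ i, X i)} (hS : S.Finite) :
    ∃ A' α', A'.Infinite ∧ Disjoint (F : Set ℕ) A' ∧
      branches X (A' ∪ F) α' ⊆ branches X (A ∪ F) α ∧
      ∀ s ∈ S, branches X A' (F.piecewise s α') ∩ Y = ∅ := by
  induction S, hS using Set.Finite.induction_on with
  | empty => exact ⟨A, α, hA, hFA, subset_rfl, by simp⟩
  | @insert s S _ _ ih =>
    obtain ⟨A', α', hA', hFA', hsub, hS⟩ := ih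
    obtain ⟨_, ⟨B, γ, hB, rfl⟩, hUW, hUY⟩ := hY _ ⟨A', F.piecewise s α', hA', rfl⟩
    obtain ⟨hBA', hγ⟩ := branches_subset_branches_iff.1 hUW
    have hγα : ∀ i ∉ A', i ∉ F → γ i = α' i := fun i hi hiF => by
      rw [hγ i hi, F.piecewise_eq_of_notMem _ _ hiF]
    refine ⟨B, γ, hB, hFA'.mono_right hBA', ?_, ?_⟩
    · refine (branches_subset_branches (union_subset_union_left _ hBA') ?_).trans hsub
      intro i hi
      exact hγα i (fun h => hi (Or.inl h)) (fun h => hi (Or.inr h))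
    rintro s' (rfl | hs')
    · convert hUY using 3
      funext i
      by_cases hiF : i ∈ F
      · rw [F.piecewise_eq_of_mem _ _ hiF, hγ i (hFA'.notMem_of_mem_left hiF),
          F.piecewise_eq_of_mem _ _ hiF]
      · rw [F.piecewise_eq_of_notMem _ _ hiF]
    · refine subset_empty_iff.1 ((inter_subset_inter_left Y ?_).trans (hS s' hs').subset)
      refine branches_subset_branches hBA' fun i hi => ?_
      by_cases hiF : i ∈ F
      · rw [F.piecewise_eq_of_mem _ _ hiF, F.piecewise_eq_of_mem _ _ hiF]
      · rw [F.piecewise_eq_of_notMem _ _ hiF, F.piecewise_eq_of_notMem _ _ hiF, hγα i hi hiF]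

lemma exists_branches_subset_inter_eq_empty [∀ i, Finite (X i)] {Y : Set (∀ i, X i)}
    (hY : Y ∈ d0 (treeV X)) {A : Set ℕ} (hA : A.Infinite) (α : ∀ i, X i) {F : Finset ℕ}
    (hFA : ↑F ⊆ A) :
    ∃ A' α', A'.Infinite ∧ ↑F ⊆ A' ∧ branches X A' α' ⊆ branches X A α ∧
      branches X A' α' ∩ Y = ∅ := by
  obtain ⟨A', α', hA', -, hsub, hY'⟩ := exists_branches_piecewise_inter_eq_empty hY
    (hA.sdiff F.finite_toSet) disjoint_sdiff_right α (finite_range_piecewise F α)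
  rw [sdiff_union_of_subset hFA] at hsub
  refine ⟨A' ∪ F, α', hA'.mono subset_union_left, subset_union_right, hsub, ?_⟩
  refine subset_empty_iff.1 fun β ⟨hβ, hβY⟩ => ?_
  have hβ' := mem_branches_piecewise hβ
  rw [← F.piecewise_idem_left β α α'] at hβ'
  exact (hY' _ ⟨β, rfl⟩).subset ⟨hβ', hβY⟩

lemma exists_branches_subset_of_antitone {A : ℕ → Set ℕ} {α : ℕ → ∀ i, X i} {B : Set ℕ}
    (hanti : Antitone fun n => branches X (A n) (α n)) (hB : ∀ n, B ⊆ A n) :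
    ∃ β, ∀ n, branches X B β ⊆ branches X (A n) (α n) := by
  classical
  have hagree : ∀ {m n i}, i ∉ A m → i ∉ A n → α m i = α n i := by
    intro m n i hm hn
    rcases le_total m n with h | h
    · exact ((branches_subset_branches_iff.1 (hanti h)).2 i hm).symm
    · exact (branches_subset_branches_iff.1 (hanti h)).2 i hn
  let β : ∀ i, X i := fun i => if h : ∃ n, i ∉ A n then α h.choose i else α 0 i
  refine ⟨β, fun n => branches_subset_branches (hB n) fun i hi => ?_⟩
  have h : ∃ n, i ∉ A n := ⟨n, hi⟩
  simp only [β, dif_pos h]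
  exact hagree h.choose_spec hi

end Branches

structure FusionCondition (X : ℕ → Type) where
  A : Set ℕ
  α : ∀ i, X i
  F : Finset ℕ
  infinite : A.Infinite
  F_subset : ↑F ⊆ A

namespace FusionCondition

variable {X : ℕ → Type} [∀ i, Finite (X i)] [∀ i, Nontrivial (X i)]

lemma exists_extend (c : FusionCondition X) {Y : Set (∀ i, X i)} (hY : Y ∈ d0 (treeV X))
    (n : ℕ) :
    ∃ c' : FusionCondition X, c.F ⊆ c'.F ∧ (∃ b ∈ c'.F, n < b) ∧
      branches X c'.A c'.α ⊆ branches X c.A c.α ∧ branches X c'.A c'.α ∩ Y = ∅ := by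
  obtain ⟨b, hbA, hnb⟩ := c.infinite.exists_gt n
  have hF : ↑(insert b c.F) ⊆ c.A := by simpa using insert_subset hbA c.F_subset
  obtain ⟨A', α', hA', hFA', hsub, hY'⟩ :=
    exists_branches_subset_inter_eq_empty hY c.infinite c.α hF
  exact ⟨⟨A', α', insert b c.F, hA', hFA'⟩, Finset.subset_insert _ _,
    ⟨b, Finset.mem_insert_self _ _, hnb⟩, hsub, hY'⟩

end FusionCondition

theorem iUnion_mem_d0_treeV {X : ℕ → Type} [∀ i, Finite (X i)] [∀ i, Nontrivial (X i)]
    {f : ℕ → Set (∀ i, X i)} (hf : ∀ n, f n ∈ d0 (treeV X)) : (⋃ n, f n) ∈ d0 (treeV X) := by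
  rintro _ ⟨A₀, α₀, hA₀, rfl⟩
  choose next hnext using fun n (c : FusionCondition X) => c.exists_extend (hf n) n
  let c : ℕ → FusionCondition X := fun n => Nat.rec ⟨A₀, α₀, ∅, hA₀, by simp⟩ next n
  have hanti : Antitone fun n => branches X (c n).A (c n).α :=
    antitone_nat_of_succ_le fun n => (hnext n (c n)).2.2.1
  have hFmono : Monotone fun n => (c n).F := monotone_nat_of_le_succ fun n => (hnext n (c n)).1
  set B := ⋃ n, ((c n).F : Set ℕ)
  have hB : ∀ n, B ⊆ (c n).A := fun n => iUnion_subset fun m => by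
    rcases le_total m n with h | h
    · exact (Finset.coe_subset.2 (hFmono h)).trans (c n).F_subset
    · exact (c m).F_subset.trans (branches_subset_branches_iff.1 (hanti h)).1
  have hBinf : B.Infinite := infinite_of_forall_exists_gt fun n =>
    let ⟨b, hb, hnb⟩ := (hnext n (c n)).2.1
    ⟨b, mem_iUnion.2 ⟨n + 1, hb⟩, hnb⟩
  obtain ⟨β, hβ⟩ := exists_branches_subset_of_antitone hanti hB
  refine ⟨branches X B β, ⟨B, β, hBinf, rfl⟩, hβ 0, ?_⟩
  refine subset_empty_iff.1 fun x ⟨hxB, hxf⟩ => ?_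
  obtain ⟨n, hxn⟩ := mem_iUnion.1 hxf
  exact (hnext n (c n)).2.2.2.subset ⟨hβ (n + 1) hxB, hxn⟩

theorem stmt9 (X : ℕ → Type) [∀ i, Finite (X i)] [∀ i, Nontrivial (X i)] :
    (∀ Y ∈ d0 (treeV X), ∀ Z ⊆ Y, Z ∈ d0 (treeV X)) ∧
      ∀ f : ℕ → Set (∀ i, X i), (∀ n, f n ∈ d0 (treeV X)) →
        (⋃ n, f n) ∈ d0 (treeV X) :=
  ⟨fun _ hY _ hZY => mem_d0_of_subset hY hZY, fun _ hf => iUnion_mem_d0_treeV hf⟩
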